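/- Let F be a field of characteristic 2 with valuation v onto a totally ordered group Γ, α₁,…,αₙ ∈ F× with negative values and 𝔽₂-independent classes in Γ/2Γ, and φ = ⟨⟨α₁,…,α_{n−1},αₙ]] on the vector space V. Then every 2-dimensional F-subspace U of V contains a vector u with φ(u) ≠ 0 and v̄(φ(u)) ≠ 0 in Γ/2Γ. -/

import Mathlib

/-!
Write `φ(x) = ∑_d D_d + ∑_e C_e` with diagonal terms `D_d = α^d x_d²` (`d ∈ {0,1}ⁿ`) and cross
terms `C_e = β^e p_e q_e`, where `x_e = (p_e, q_e)` and `β = (α₁, …, α_{n-1})`. A nonzero `D_d` has value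
class `v̄(α^d)` in `Γ/2Γ`, and independence makes these classes pairwise distinct, so the nonzero
diagonal terms have pairwise distinct values and one of them, `D_{d₀}`, has the least value. Each
cross term satisfies `C_e² αₙ = D_{(e,0)} D_{(e,1)}`, so `v(αₙ) < 0` puts `v(C_e)` strictly above
`v(D_{d₀})`. Hence `v(φ(x)) = v(D_{d₀})`, whose class is `v̄(α^{d₀})`. Since `dim U = 2`, some
nonzero `x ∈ U` has `p_0 = 0`, so `D_0 = 0` and `d₀ ≠ 0`, and then `v̄(φ(x)) ≠ 0`.
-/


/-- The subfield of squares `F²` of a field of characteristic 2. -/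
def sqSubfield (F : Type*) [Field F] [CharP F 2] : Subfield F where
  carrier := {x | ∃ y : F, y ^ 2 = x}
  mul_mem' := by rintro a b ⟨y, rfl⟩ ⟨z, rfl⟩; exact ⟨y * z, by ring⟩
  one_mem' := ⟨1, one_pow 2⟩
  add_mem' := by
    rintro a b ⟨y, rfl⟩ ⟨z, rfl⟩
    exact ⟨y + z, by rw [add_sq]; linear_combination (y*z) * (CharP.cast_eq_zero F 2)⟩
  zero_mem' := ⟨0, by ring⟩
  neg_mem' := by rintro a ⟨y, rfl⟩; exact ⟨y, (CharTwo.neg_eq _).symm⟩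
  inv_mem' := by rintro a ⟨y, rfl⟩; exact ⟨y⁻¹, by rw [inv_pow]⟩

/-- The monomial `β₁^{d₁} ⋯ βₙ^{dₙ}`. -/
def mono {R : Type*} [CommRing R] {n : ℕ} (β : Fin n → R) (d : Fin n → Bool) : R :=
  ∏ i, if d i then β i else 1

/-- The diagonal bilinear `n`-fold Pfister form `⟨⟨β₁,…,βₙ⟩⟩_b`. -/
def bPf (F : Type*) [Field F] {n : ℕ} (β : Fin n → F) (v w : (Fin n → Bool) → F) : F :=
  ∑ d, mono β d * v d * w d

/-- Pure part of the bilinear Pfister form. -/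
def bPfPure (F : Type*) [Field F] {n : ℕ} (β : Fin n → F)
    (v w : {d : Fin n → Bool // d ≠ fun _ => false} → F) : F :=
  ∑ d, mono β d.1 * v d * w d

/-- Anisotropy of a bilinear form. -/
def BAniso (F : Type*) [Field F] {V : Type*} [AddCommGroup V] [Module F V]
    (B : V → V → F) : Prop :=
  ∀ v : V, v ≠ 0 → B v v ≠ 0

/-- Isometry of bilinear forms. -/
def BilinIsom (F : Type*) [Field F] {V W : Type*} [AddCommGroup V] [Module F V]
    [AddCommGroup W] [Module F W] (B₁ : V → V → F) (B₂ : W → W → F) : Prop :=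
  ∃ e : V ≃ₗ[F] W, ∀ v w, B₂ (e v) (e w) = B₁ v w

/-- Isometry of quadratic forms (given as value functions). -/
def QuadIsom (F : Type*) [Field F] {V W : Type*} [AddCommGroup V] [Module F V]
    [AddCommGroup W] [Module F W] (q₁ : V → F) (q₂ : W → F) : Prop :=
  ∃ e : V ≃ₗ[F] W, ∀ v, q₂ (e v) = q₁ v

/-- The quadratic Pfister form `⟨⟨β₁,…,β_m, a]]` as a value function. -/
def qPf (R : Type*) [CommRing R] {m : ℕ} (β : Fin m → R) (a : R)
    (x : (Fin m → Bool) → R × R) : R :=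
  ∑ e, mono β e * ((x e).1 ^ 2 + (x e).1 * (x e).2 + a * (x e).2 ^ 2)

/-- Minimal index where `d` is `true`. -/
noncomputable def minIdx {n : ℕ} (d : Fin n → Bool) (hd : d ≠ fun _ => false) : Fin n :=
  (Finset.univ.filter fun i => d i = true).min' (by
    obtain ⟨i, hi⟩ := Function.ne_iff.mp hd
    exact ⟨i, Finset.mem_filter.mpr ⟨Finset.mem_univ i, by simpa using hi⟩⟩)

/-- Remove the `ℓ`-th entry from a tuple. -/
def removeIdx {R : Type*} {n : ℕ} (α : Fin n → R) (ℓ : Fin n) (i : Fin (n - 1)) : R :=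
  if h : (i : ℕ) < (ℓ : ℕ) then α ⟨i, by omega⟩ else α ⟨(i : ℕ) + 1, by omega⟩

/-- First `n-1` entries of a tuple. -/
def front {R : Type*} {n : ℕ} (α : Fin n → R) (i : Fin (n - 1)) : R :=
  α ⟨i, by omega⟩

/-- Last entry of a tuple (junk value `0` if the tuple is empty). -/
def qlast {R : Type*} [CommRing R] {n : ℕ} (α : Fin n → R) : R :=
  if h : n = 0 then 0 else α ⟨n - 1, by omega⟩

section WithTopValuation

variable {F Γ : Type*} [Field F] [AddCommGroup Γ] [LinearOrder Γ] [IsOrderedAddMonoid Γ]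

open Classical in
noncomputable def withTopAddValuation (v : F → Γ)
    (hmul : ∀ x y : F, x ≠ 0 → y ≠ 0 → v (x * y) = v x + v y)
    (hadd : ∀ x y : F, x ≠ 0 → y ≠ 0 → x + y ≠ 0 → min (v x) (v y) ≤ v (x + y)) :
    AddValuation F (WithTop Γ) :=
  AddValuation.of (fun x => if x = 0 then ⊤ else (v x : WithTop Γ)) (if_pos rfl)
    (by
      have h := hmul 1 1 one_ne_zero one_ne_zero
      rw [mul_one, left_eq_add] at h
      simp [h])
    (by
      intro x y
      by_cases hx : x = 0
      · simp [hx]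
      by_cases hy : y = 0
      · simp [hy]
      by_cases hxy : x + y = 0
      · simp [hxy]
      simp only [hx, hy, hxy, if_false, ← WithTop.coe_min, WithTop.coe_le_coe]
      exact hadd x y hx hy hxy)
    (by
      intro x y
      by_cases hx : x = 0
      · simp [hx]
      by_cases hy : y = 0
      · simp [hy]
      simp [hx, hy, hmul x y hx hy])

theorem withTopAddValuation_of_ne_zero {v : F → Γ}
    {hmul : ∀ x y : F, x ≠ 0 → y ≠ 0 → v (x * y) = v x + v y}
    {hadd : ∀ x y : F, x ≠ 0 → y ≠ 0 → x + y ≠ 0 → min (v x) (v y) ≤ v (x + y)}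
    {x : F} (hx : x ≠ 0) : withTopAddValuation v hmul hadd x = v x := by
  simp [withTopAddValuation, AddValuation.of_apply, hx]

end WithTopValuation

theorem Set.InjOn.exists_forall_lt_of_ne_top {ι α : Type*} [Finite ι] [LinearOrder α] [OrderTop α]
    {f : ι → α} (hf : Set.InjOn f {i | f i ≠ ⊤}) (hne : ∃ i, f i ≠ ⊤) :
    ∃ j, f j ≠ ⊤ ∧ ∀ i ≠ j, f j < f i := by
  obtain ⟨i₀, hi₀⟩ := hne
  have : Nonempty ι := ⟨i₀⟩
  obtain ⟨j, hj⟩ := Finite.exists_min f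
  have hjtop : f j ≠ ⊤ := ne_top_of_le_ne_top hi₀ (hj i₀)
  refine ⟨j, hjtop, fun i hij => (hj i).lt_of_ne fun h => hij ?_⟩
  exact (hf hjtop (show f i ≠ ⊤ from h ▸ hjtop) h).symm

theorem WithTop.lt_of_two_nsmul_add_eq_add {Γ : Type*} [AddCommGroup Γ] [LinearOrder Γ]
    [IsOrderedAddMonoid Γ] {a c g x y : WithTop Γ} (ha : a < 0) (hg : g ≠ ⊤)
    (h : 2 • c + a = x + y) (hx : g ≤ x) (hy : g ≤ y) : g < c := by
  by_contra! hc
  have h2g : 2 • g ≠ ⊤ := by rw [two_nsmul]; exact WithTop.add_ne_top.mpr ⟨hg, hg⟩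
  have : x + y < x + y :=
    calc x + y = 2 • c + a := h.symm
      _ ≤ 2 • g + a := by gcongr
      _ < 2 • g + 0 := WithTop.add_lt_add_left h2g ha
      _ = g + g := by rw [add_zero, two_nsmul]
      _ ≤ x + y := add_le_add hx hy
  exact lt_irrefl _ this

namespace AddValuation

variable {F Γ : Type*} [Field F] [AddCommGroup Γ] [LinearOrder Γ] [IsOrderedAddMonoid Γ]
  (w : AddValuation F (WithTop Γ))

-- `v̄(x) = 0` in `Γ/2Γ`; never true of `x = 0`, whose value is `⊤`.
def HasEvenValue (x : F) : Prop :=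
  ∃ g : Γ, w x = ((2 • g : Γ) : WithTop Γ)

variable {w}

theorem exists_eq_coe_of_ne_zero {x : F} (hx : x ≠ 0) : ∃ g : Γ, w x = g :=
  WithTop.ne_top_iff_exists.mp ((w.ne_top_iff).mpr hx) |>.imp fun _ h => h.symm

theorem hasEvenValue_sq {y : F} (hy : y ≠ 0) : w.HasEvenValue (y ^ 2) := by
  obtain ⟨g, hg⟩ := exists_eq_coe_of_ne_zero (w := w) hy
  exact ⟨g, by rw [map_pow, hg, WithTop.coe_nsmul]⟩

theorem HasEvenValue.of_mul_sq {a y : F} (h : w.HasEvenValue (a * y ^ 2)) (hy : y ≠ 0) :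
    w.HasEvenValue a := by
  obtain ⟨g, hg⟩ := h
  obtain ⟨gy, hgy⟩ := exists_eq_coe_of_ne_zero (w := w) hy
  refine ⟨g - gy, ?_⟩
  calc w a = w (a * y ^ 2 / y ^ 2) := by rw [mul_div_cancel_right₀ _ (pow_ne_zero 2 hy)]
    _ = _ := by
      rw [map_div, map_pow, hg, hgy, ← WithTop.coe_nsmul,
        ← WithTop.LinearOrderedAddCommGroup.coe_sub, smul_sub]

end AddValuation

section Pfister

-- For `d = Fin.snoc e b`, `α^d` appears in `qPf` with coefficient `(x e).1 ^ 2`, or `(x e).2 ^ 2`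
-- if `b`.
def diagCoord {R : Type*} {m : ℕ} (x : (Fin m → Bool) → R × R) (d : Fin (m + 1) → Bool) : R :=
  if d (Fin.last m) then (x (Fin.init d)).2 else (x (Fin.init d)).1

@[simp]
theorem diagCoord_snoc {R : Type*} {m : ℕ} (x : (Fin m → Bool) → R × R) (e : Fin m → Bool)
    (b : Bool) : diagCoord x (Fin.snoc e b) = if b then (x e).2 else (x e).1 := by
  simp [diagCoord]

variable {R : Type*} [CommRing R] {m : ℕ}

theorem mono_snoc (α : Fin (m + 1) → R) (e : Fin m → Bool) (b : Bool) :
    mono α (Fin.snoc e b) = mono (Fin.init α) e * if b then α (Fin.last m) else 1 := by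
  simp [mono, Fin.prod_univ_castSucc, Fin.init]

theorem mono_mul_mono {n : ℕ} (α : Fin n → R) (d d' : Fin n → Bool) :
    mono α d * mono α d' =
      mono α (fun i => xor (d i) (d' i)) * mono α (fun i => d i && d' i) ^ 2 := by
  simp only [mono, ← Finset.prod_mul_distrib, ← Finset.prod_pow]
  refine Finset.prod_congr rfl fun i _ => ?_
  rcases Bool.eq_false_or_eq_true (d i) with h | h <;>
    rcases Bool.eq_false_or_eq_true (d' i) with h' | h' <;> simp [h, h', sq]

theorem mono_ne_zero [NoZeroDivisors R] [Nontrivial R] {n : ℕ} {α : Fin n → R}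
    (hα : ∀ i, α i ≠ 0) (d : Fin n → Bool) : mono α d ≠ 0 :=
  Finset.prod_ne_zero_iff.mpr fun i _ => by split_ifs <;> simp [hα i]

theorem qPf_eq_sum_diag_add_sum_cross (α : Fin (m + 1) → R) (x : (Fin m → Bool) → R × R) :
    qPf R (Fin.init α) (α (Fin.last m)) x =
      ∑ d, mono α d * diagCoord x d ^ 2 + ∑ e, mono (Fin.init α) e * ((x e).1 * (x e).2) := by
  rw [← (Fin.snocEquiv fun _ : Fin (m + 1) => Bool).sum_comp
      (fun d : Fin (m + 1) → Bool => mono α d * diagCoord x d ^ 2),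
    Fintype.sum_prod_type, Fintype.sum_bool, qPf, ← Finset.sum_add_distrib,
    ← Finset.sum_add_distrib]
  refine Finset.sum_congr rfl fun e _ => ?_
  simp only [Fin.snocEquiv, Equiv.coe_fn_mk, mono_snoc, diagCoord_snoc, Bool.false_eq_true,
    ↓reduceIte]
  ring

theorem cross_sq_mul_last (α : Fin (m + 1) → R) (x : (Fin m → Bool) → R × R) (e : Fin m → Bool) :
    (mono (Fin.init α) e * ((x e).1 * (x e).2)) ^ 2 * α (Fin.last m) =
      mono α (Fin.snoc e false) * diagCoord x (Fin.snoc e false) ^ 2 *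
        (mono α (Fin.snoc e true) * diagCoord x (Fin.snoc e true) ^ 2) := by
  simp only [mono_snoc, diagCoord_snoc, Bool.false_eq_true, ↓reduceIte]
  ring

end Pfister

section Valuation

variable {F Γ : Type*} [Field F] [AddCommGroup Γ] [LinearOrder Γ] [IsOrderedAddMonoid Γ]
  (w : AddValuation F (WithTop Γ))

theorem AddValuation.map_mono {n : ℕ} (α : Fin n → F) (d : Fin n → Bool) :
    w (mono α d) = ∑ i, if d i then w (α i) else 0 := by
  simp only [mono]
  induction (Finset.univ : Finset (Fin n)) using Finset.induction_on with
  | empty => simp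
  | insert i s hi ih =>
    rw [Finset.prod_insert hi, Finset.sum_insert hi, w.map_mul, ih]
    split_ifs <;> simp

variable {w}

theorem AddValuation.map_mono_mul_sq_ne {n : ℕ} {α : Fin n → F} (hα : ∀ i, α i ≠ 0)
    (hind : ∀ c, (∃ i, c i = true) → ¬ w.HasEvenValue (mono α c))
    {d d' : Fin n → Bool} (hdd : d ≠ d') {y y' : F} (hy : y ≠ 0) (hy' : y' ≠ 0) :
    w (mono α d * y ^ 2) ≠ w (mono α d' * y' ^ 2) := by
  intro heq
  obtain ⟨i, hi⟩ := Function.ne_iff.mp hdd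
  have hsplit : mono α d * y ^ 2 * mono α d' =
      mono α (fun i => xor (d i) (d' i)) * (mono α (fun i => d i && d' i) * y) ^ 2 := by
    rw [mul_right_comm, mono_mul_mono]
    ring
  obtain ⟨g, hg⟩ := AddValuation.hasEvenValue_sq (w := w) (mul_ne_zero (mono_ne_zero hα d') hy')
  refine hind (fun i => xor (d i) (d' i)) ⟨i, by simpa using hi⟩
    (AddValuation.HasEvenValue.of_mul_sq (y := mono α (fun i => d i && d' i) * y) ⟨g, ?_⟩
      (mul_ne_zero (mono_ne_zero hα _) hy))
  rw [← hsplit, w.map_mul, heq, ← w.map_mul, ← hg]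
  ring_nf

theorem qPf_ne_zero_and_not_hasEvenValue {m : ℕ} {α : Fin (m + 1) → F} (hα : ∀ i, α i ≠ 0)
    (hlast : w (α (Fin.last m)) < 0)
    (hind : ∀ c, (∃ i, c i = true) → ¬ w.HasEvenValue (mono α c))
    {x : (Fin m → Bool) → F × F} (hx : x ≠ 0) (hx0 : (x fun _ => false).1 = 0) :
    qPf F (Fin.init α) (α (Fin.last m)) x ≠ 0 ∧
      ¬ w.HasEvenValue (qPf F (Fin.init α) (α (Fin.last m)) x) := by
  set D : (Fin (m + 1) → Bool) → F := fun d => mono α d * diagCoord x d ^ 2 with hD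
  have hD_ne_top : ∀ {d}, w (D d) ≠ ⊤ ↔ diagCoord x d ≠ 0 := by
    intro d
    rw [w.ne_top_iff]
    simp [hD, mono_ne_zero hα]
  have hinj : Set.InjOn (fun d => w (D d)) {d | w (D d) ≠ ⊤} := fun d hd d' hd' heq => by
    by_contra hne
    exact AddValuation.map_mono_mul_sq_ne hα hind hne (hD_ne_top.mp hd) (hD_ne_top.mp hd') heq
  have hsupp : ∃ d, w (D d) ≠ ⊤ := by
    obtain ⟨e, he⟩ := Function.ne_iff.mp hx
    by_cases h : (x e).1 = 0
    · exact ⟨Fin.snoc e true, hD_ne_top.mpr fun h' => he (Prod.ext h (by simpa using h'))⟩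
    · exact ⟨Fin.snoc e false, hD_ne_top.mpr (by simpa using h)⟩
  obtain ⟨d₀, hd₀, hlt⟩ := hinj.exists_forall_lt_of_ne_top hsupp
  have hle : ∀ d, w (D d₀) ≤ w (D d) := fun d => by
    rcases eq_or_ne d d₀ with rfl | h
    exacts [le_rfl, (hlt d h).le]
  have hcross : ∀ e, w (D d₀) < w (mono (Fin.init α) e * ((x e).1 * (x e).2)) := fun e =>
    WithTop.lt_of_two_nsmul_add_eq_add hlast hd₀
      (by rw [← w.map_pow, ← w.map_mul, ← w.map_mul]; exact congrArg w (cross_sq_mul_last α x e))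
      (hle _) (hle _)
  have hval : w (qPf F (Fin.init α) (α (Fin.last m)) x) = w (D d₀) := by
    rw [qPf_eq_sum_diag_add_sum_cross, ← Finset.add_sum_erase _ _ (Finset.mem_univ d₀), add_assoc]
    exact w.map_add_eq_of_lt_left <| w.map_lt_add
      (w.map_lt_sum hd₀ fun d hd => hlt d (Finset.ne_of_mem_erase hd))
      (w.map_lt_sum hd₀ fun e _ => hcross e)
  have hd₀_ne : ∃ i, d₀ i = true := by
    by_contra! h
    have hinit : Fin.init d₀ = fun _ => false :=
      funext fun i => by simpa [Fin.init] using h i.castSucc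
    exact hD_ne_top.mp hd₀ (by simpa [diagCoord, hinit, h] using hx0)
  refine ⟨fun h0 => hd₀ ?_, fun ⟨g, hg⟩ => hind d₀ hd₀_ne ?_⟩
  · rw [← hval, h0, w.map_zero]
  · exact AddValuation.HasEvenValue.of_mul_sq ⟨g, hval ▸ hg⟩ (hD_ne_top.mp hd₀)

end Valuation

theorem Submodule.exists_mem_ne_zero_map_eq_zero {K V : Type*} [Field K] [AddCommGroup V]
    [Module K V] (U : Submodule K V) (hU : 1 < Module.finrank K U) (f : V →ₗ[K] K) :
    ∃ x ∈ U, x ≠ 0 ∧ f x = 0 := by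
  have : FiniteDimensional K U := Module.finite_of_finrank_pos (by omega)
  obtain ⟨x, hx, hx0⟩ := (Submodule.ne_bot_iff _).mp
    (LinearMap.ker_ne_bot_of_finrank_lt (f := f.domRestrict U) (by rwa [Module.finrank_self]))
  exact ⟨x, x.2, fun h => hx0 (Subtype.ext h), hx⟩

theorem stmt_13_general (F Γ : Type*) [Field F]
    [AddCommGroup Γ] [LinearOrder Γ] [IsOrderedAddMonoid Γ] (v : F → Γ)
    (hmul : ∀ x y : F, x ≠ 0 → y ≠ 0 → v (x * y) = v x + v y)
    (hadd : ∀ x y : F, x ≠ 0 → y ≠ 0 → x + y ≠ 0 → min (v x) (v y) ≤ v (x + y))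
    (n : ℕ) (hn : 1 ≤ n) (α : Fin n → F) (hα0 : ∀ i, α i ≠ 0)
    (hneg : ∀ i, v (α i) < 0)
    (hind : ∀ c : Fin n → Bool, (∃ i, c i = true) →
      ∀ h : Γ, (∑ i, if c i then v (α i) else 0) ≠ 2 • h)
    (U : Submodule F ((Fin (n - 1) → Bool) → F × F))
    (hU : Module.finrank F U = 2) :
    ∃ u ∈ U, qPf F (front α) (qlast α) u ≠ 0 ∧
      ∀ h : Γ, v (qPf F (front α) (qlast α) u) ≠ 2 • h := by
  obtain ⟨m, rfl⟩ : ∃ m, n = m + 1 := ⟨n - 1, by omega⟩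
  change ∃ u ∈ U, qPf F (Fin.init α) (α (Fin.last m)) u ≠ 0 ∧
    ∀ h : Γ, v (qPf F (Fin.init α) (α (Fin.last m)) u) ≠ 2 • h
  set w := withTopAddValuation v hmul hadd
  have hwα : ∀ i, w (α i) = v (α i) := fun i => withTopAddValuation_of_ne_zero (hα0 i)
  have hmono : ∀ c, (∃ i, c i = true) → ¬ w.HasEvenValue (mono α c) := by
    rintro c hc ⟨g, hg⟩
    refine hind c hc g (WithTop.coe_injective ?_)
    rw [← hg, w.map_mono, WithTop.coe_sum]
    simp only [hwα, apply_ite, WithTop.coe_zero]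
  obtain ⟨x, hxU, hx, hx0⟩ := U.exists_mem_ne_zero_map_eq_zero (by omega)
    ((LinearMap.fst F F F).comp (LinearMap.proj fun _ => false))
  obtain ⟨hne, hodd⟩ := qPf_ne_zero_and_not_hasEvenValue hα0
    (by rw [hwα]; exact_mod_cast hneg _) hmono hx hx0
  exact ⟨x, hxU, hne, fun h hh => hodd ⟨h, by rw [withTopAddValuation_of_ne_zero hne, hh]⟩⟩

/-- under the hypotheses of the CGV lemma, every 2-dimensional
subspace `U` of the underlying space of `φ = ⟨⟨α₁,…,α_{n-1},αₙ]]` contains a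
vector `u` with `φ(u) ≠ 0` and `v̄(φ(u)) ≠ 0` in `Γ/2Γ`. -/
theorem stmt_13 (F Γ : Type*) [Field F] [CharP F 2]
    [AddCommGroup Γ] [LinearOrder Γ] [IsOrderedAddMonoid Γ] (v : F → Γ)
    (hmul : ∀ x y : F, x ≠ 0 → y ≠ 0 → v (x * y) = v x + v y)
    (hadd : ∀ x y : F, x ≠ 0 → y ≠ 0 → x + y ≠ 0 → min (v x) (v y) ≤ v (x + y))
    (hsurj : ∀ g : Γ, ∃ x : F, x ≠ 0 ∧ v x = g)
    (n : ℕ) (hn : 1 ≤ n) (α : Fin n → F) (hα0 : ∀ i, α i ≠ 0)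
    (hneg : ∀ i, v (α i) < 0)
    (hind : ∀ c : Fin n → Bool, (∃ i, c i = true) →
      ∀ h : Γ, (∑ i, if c i then v (α i) else 0) ≠ 2 • h)
    (U : Submodule F ((Fin (n - 1) → Bool) → F × F))
    (hU : Module.finrank F U = 2) :
    ∃ u ∈ U, qPf F (front α) (qlast α) u ≠ 0 ∧
      ∀ h : Γ, v (qPf F (front α) (qlast α) u) ≠ 2 • h :=
  stmt_13_general F Γ v hmul hadd n hn α hα0 hneg hind U hU
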